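/- Let C be a compact Riemann surface of genus g ≥ 2, x ∈ C, and let j_x : H⁰(C, K_C(2x)) → H¹(C, ℂ) be the injective map sending a meromorphic 1-form with at most a double pole at x (and zero residue) to its de Rham class on C ∖ {x}, extended by H¹(C∖{x}, ℂ) ≅ H¹(C, ℂ). Then the intersection j_x(H⁰(C, K_C(2x))) ∩ H^{0,1}(C) inside H¹(C, ℂ) is exactly one-dimensional. -/

import Mathlib

/-!
Since `H^{1,0}` lies in the image `R` of `j_x` and is complementary to `H^{0,1}`, the modular
law makes `R ∩ H^{0,1}` a complement of `H^{1,0}` inside `R`; hence its dimension is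
`(g + 1) - g = 1`.
-/

open Module

theorem Submodule.finrank_add_finrank_inf_of_isCompl_of_le {K V : Type*} [DivisionRing K]
    [AddCommGroup V] [Module K V] {p q r : Submodule K V} [FiniteDimensional K r]
    (hpq : IsCompl p q) (hpr : p ≤ r) :
    finrank K p + finrank K (r ⊓ q : Submodule K V) = finrank K r := by
  have : FiniteDimensional K p := Submodule.finiteDimensional_of_le hpr
  have : FiniteDimensional K (r ⊓ q : Submodule K V) :=
    Submodule.finiteDimensional_of_le inf_le_left
  have hsup : p ⊔ r ⊓ q = r := by
    rw [inf_comm r, ← sup_inf_assoc_of_le q hpr, hpq.sup_eq_top, top_inf_eq]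
  have hinf : p ⊓ (r ⊓ q) = ⊥ := by
    rw [inf_left_comm, hpq.inf_eq_bot, inf_bot_eq]
  have hdim := Submodule.finrank_sup_add_finrank_inf_eq p (r ⊓ q)
  rw [hsup, hinf, finrank_bot, add_zero] at hdim
  exact hdim.symm

theorem stmt_6_general (g : ℕ)
    (H1 : Type) [AddCommGroup H1] [Module ℂ H1]
    (V : Type) [AddCommGroup V] [Module ℂ V]
    (j : V →ₗ[ℂ] H1) (hj : Function.Injective j)
    (H10 H01 : Submodule ℂ H1)
    (hcompl : IsCompl H10 H01)
    (h10 : finrank ℂ H10 = g)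
    (hV : finrank ℂ V = g + 1)
    (hsub : H10 ≤ LinearMap.range j) :
    finrank ℂ (LinearMap.range j ⊓ H01 : Submodule ℂ H1) = 1 := by
  have : FiniteDimensional ℂ V := Module.finite_of_finrank_pos (by omega)
  have hrange : finrank ℂ (LinearMap.range j) = g + 1 := by
    rw [LinearMap.finrank_range_of_inj hj, hV]
  have := Submodule.finrank_add_finrank_inf_of_isCompl_of_le hcompl hsub
  omega

/-- For a compact Riemann surface of genus `g ≥ 2` and `x ∈ C`, with
`H1 = H¹(C, ℂ)` of dimension `2g`, Hodge decomposition `H1 = H10 ⊕ H01` with both pieces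
of dimension `g`, `V = H⁰(C, K_C(2x))` of dimension `g + 1`, and the injective de Rham
class map `j = j_x : V → H1` whose image contains `H10 = H^{1,0}(C)`, the intersection
`j_x(H⁰(C, K_C(2x))) ∩ H^{0,1}(C)` is exactly one-dimensional. -/
theorem stmt_6 (g : ℕ) (hg : 2 ≤ g)
    (H1 : Type) [AddCommGroup H1] [Module ℂ H1] [FiniteDimensional ℂ H1]
    (V : Type) [AddCommGroup V] [Module ℂ V] [FiniteDimensional ℂ V]
    (j : V →ₗ[ℂ] H1) (hj : Function.Injective j)
    (H10 H01 : Submodule ℂ H1)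
    (hcompl : IsCompl H10 H01)
    (hH1 : finrank ℂ H1 = 2 * g)
    (h10 : finrank ℂ H10 = g) (h01 : finrank ℂ H01 = g)
    (hV : finrank ℂ V = g + 1)
    (hsub : H10 ≤ LinearMap.range j) :
    finrank ℂ (LinearMap.range j ⊓ H01 : Submodule ℂ H1) = 1 :=
  stmt_6_general g H1 V j hj H10 H01 hcompl h10 hV hsub
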